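/- Let k be a field, g a Lie algebra over k, X = k ⊕ g, and T : X^⊗3 → X the ternary self-distributive map T((a,x)⊗(b,y)⊗(c,z)) = (abc, bc·x + c[x,y] + b[x,z] + [[x,y],z]). Let φ : g × g → g be a Lie 2-cocycle and suppose that Θ²(φ) = δ¹_TSD f for some ternary coderivation f : X → X, where Θ²(φ)((a,x)⊗(b,y)⊗(c,z)) = (0, bφ(x,z) + cφ(x,y) + [φ(x,y),z] + φ([x,y],z)) and δ¹_TSD f(x⊗y⊗z) = f(T(x⊗y⊗z)) − T(f(x)⊗y⊗z) − T(x⊗f(y)⊗z) − T(x⊗y⊗f(z)). Then φ is a Lie 2-coboundary: there exists a linear map g' : g → g with φ(x,y) = g'([x,y]) − [g'(x),y] − [x,g'(y)] for all x,y. In particular Θ² is injective on cohomology. -/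

import Mathlib

open TensorProduct

noncomputable section

section TSDCore

variable {k : Type*} [Field k] {X : Type*} [AddCommGroup X] [Module k X]

/-- The ternary comultiplication `Δ₃ = (Δ ⊗ id) ∘ Δ`. -/
def D3 (Δ : X →ₗ[k] X ⊗[k] X) : X →ₗ[k] (X ⊗[k] X) ⊗[k] X :=
  TensorProduct.map Δ LinearMap.id ∘ₗ Δ

/-- `f : X → X` is a ternary coderivation:
`Δ₃∘f = (f⊗id⊗id + id⊗f⊗id + id⊗id⊗f)∘Δ₃`. -/
def IsTernaryCoderivation (Δ : X →ₗ[k] X ⊗[k] X) (f : X →ₗ[k] X) : Prop :=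
  D3 Δ ∘ₗ f
    = (TensorProduct.map (TensorProduct.map f LinearMap.id) LinearMap.id
        + TensorProduct.map (TensorProduct.map LinearMap.id f) LinearMap.id
        + TensorProduct.map (LinearMap.id : X ⊗[k] X →ₗ[k] X ⊗[k] X) f) ∘ₗ D3 Δ

/-- The TSD 2-cochain condition
`Δ₃∘ψ = (ψ⊗T⊗T + T⊗ψ⊗T + T⊗T⊗ψ)∘sh∘(Δ₃⊗Δ₃⊗Δ₃)`, relative to the shuffle `sh`
(which sends `x₁⊗…⊗x₉` to `x₁⊗x₄⊗x₇⊗x₂⊗x₅⊗x₈⊗x₃⊗x₆⊗x₉`). -/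
def IsTSD2Cochain (Δ : X →ₗ[k] X ⊗[k] X) (T : (X ⊗[k] X) ⊗[k] X →ₗ[k] X)
    (sh : (((X ⊗[k] X) ⊗[k] X) ⊗[k] ((X ⊗[k] X) ⊗[k] X)) ⊗[k] ((X ⊗[k] X) ⊗[k] X) →ₗ[k]
      (((X ⊗[k] X) ⊗[k] X) ⊗[k] ((X ⊗[k] X) ⊗[k] X)) ⊗[k] ((X ⊗[k] X) ⊗[k] X))
    (ψ : (X ⊗[k] X) ⊗[k] X →ₗ[k] X) : Prop :=
  D3 Δ ∘ₗ ψ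
    = (TensorProduct.map (TensorProduct.map ψ T) T
        + TensorProduct.map (TensorProduct.map T ψ) T
        + TensorProduct.map (TensorProduct.map T T) ψ) ∘ₗ sh ∘ₗ
      TensorProduct.map (TensorProduct.map (D3 Δ) (D3 Δ)) (D3 Δ)

/-- The coalgebra-morphism condition `Δ₃∘T = (T⊗T⊗T)∘sh∘(Δ₃⊗Δ₃⊗Δ₃)`. -/
def IsCoalgMor3 (Δ : X →ₗ[k] X ⊗[k] X) (T : (X ⊗[k] X) ⊗[k] X →ₗ[k] X)
    (sh : (((X ⊗[k] X) ⊗[k] X) ⊗[k] ((X ⊗[k] X) ⊗[k] X)) ⊗[k] ((X ⊗[k] X) ⊗[k] X) →ₗ[k]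
      (((X ⊗[k] X) ⊗[k] X) ⊗[k] ((X ⊗[k] X) ⊗[k] X)) ⊗[k] ((X ⊗[k] X) ⊗[k] X)) : Prop :=
  D3 Δ ∘ₗ T
    = TensorProduct.map (TensorProduct.map T T) T ∘ₗ sh ∘ₗ
      TensorProduct.map (TensorProduct.map (D3 Δ) (D3 Δ)) (D3 Δ)

/-- The ternary self-distributivity condition
`T(T(x⊗y⊗z)⊗w⊗u) = T(T(x⊗w⁽¹⁾⊗u⁽¹⁾)⊗T(y⊗w⁽²⁾⊗u⁽²⁾)⊗T(z⊗w⁽³⁾⊗u⁽³⁾))`, stated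
compositionally on `X^{⊗3} ⊗ X^{⊗2}`, relative to the rearrangement `ρ` (which sends
`(x⊗y⊗z)⊗((w₁⊗w₂⊗w₃)⊗(u₁⊗u₂⊗u₃))` to `(x⊗w₁⊗u₁)⊗(y⊗w₂⊗u₂)⊗(z⊗w₃⊗u₃)`). -/
def IsTSDMap (Δ : X →ₗ[k] X ⊗[k] X) (T : (X ⊗[k] X) ⊗[k] X →ₗ[k] X)
    (ρ : ((X ⊗[k] X) ⊗[k] X) ⊗[k] (((X ⊗[k] X) ⊗[k] X) ⊗[k] ((X ⊗[k] X) ⊗[k] X)) →ₗ[k]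
      (((X ⊗[k] X) ⊗[k] X) ⊗[k] ((X ⊗[k] X) ⊗[k] X)) ⊗[k] ((X ⊗[k] X) ⊗[k] X)) : Prop :=
  T ∘ₗ (TensorProduct.assoc k X X X).symm.toLinearMap ∘ₗ
      TensorProduct.map T (LinearMap.id : X ⊗[k] X →ₗ[k] X ⊗[k] X)
    = T ∘ₗ TensorProduct.map (TensorProduct.map T T) T ∘ₗ ρ ∘ₗ
      TensorProduct.map LinearMap.id (TensorProduct.map (D3 Δ) (D3 Δ))

/-- The TSD first differential
`δ¹f(x⊗y⊗z) = f(T(x⊗y⊗z)) − T(f(x)⊗y⊗z) − T(x⊗f(y)⊗z) − T(x⊗y⊗f(z))`. -/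
def tsdD1 (T : (X ⊗[k] X) ⊗[k] X →ₗ[k] X) (f : X →ₗ[k] X) :
    (X ⊗[k] X) ⊗[k] X →ₗ[k] X :=
  f ∘ₗ T - T ∘ₗ TensorProduct.map (TensorProduct.map f LinearMap.id) LinearMap.id
    - T ∘ₗ TensorProduct.map (TensorProduct.map LinearMap.id f) LinearMap.id
    - T ∘ₗ TensorProduct.map (LinearMap.id : X ⊗[k] X →ₗ[k] X ⊗[k] X) f

/-- The TSD second differential `δ²ψ`, stated compositionally on `X^{⊗3} ⊗ X^{⊗2}`:
`δ²ψ(x⊗y⊗z⊗w⊗u) = T(ψ(x⊗y⊗z)⊗w⊗u) + ψ(T(x⊗y⊗z)⊗w⊗u)`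
`− ψ(T(x⊗w⁽¹⁾⊗u⁽¹⁾)⊗T(y⊗w⁽²⁾⊗u⁽²⁾)⊗T(z⊗w⁽³⁾⊗u⁽³⁾))`
`− T(ψ(x⊗w⁽¹⁾⊗u⁽¹⁾)⊗T(y⊗w⁽²⁾⊗u⁽²⁾)⊗T(z⊗w⁽³⁾⊗u⁽³⁾))`
`− T(T(x⊗w⁽¹⁾⊗u⁽¹⁾)⊗ψ(y⊗w⁽²⁾⊗u⁽²⁾)⊗T(z⊗w⁽³⁾⊗u⁽³⁾))`
`− T(T(x⊗w⁽¹⁾⊗u⁽¹⁾)⊗T(y⊗w⁽²⁾⊗u⁽²⁾)⊗ψ(z⊗w⁽³⁾⊗u⁽³⁾))`, relative to `ρ`. -/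
def tsdD2 (Δ : X →ₗ[k] X ⊗[k] X) (T : (X ⊗[k] X) ⊗[k] X →ₗ[k] X)
    (ρ : ((X ⊗[k] X) ⊗[k] X) ⊗[k] (((X ⊗[k] X) ⊗[k] X) ⊗[k] ((X ⊗[k] X) ⊗[k] X)) →ₗ[k]
      (((X ⊗[k] X) ⊗[k] X) ⊗[k] ((X ⊗[k] X) ⊗[k] X)) ⊗[k] ((X ⊗[k] X) ⊗[k] X))
    (ψ : (X ⊗[k] X) ⊗[k] X →ₗ[k] X) :
    ((X ⊗[k] X) ⊗[k] X) ⊗[k] (X ⊗[k] X) →ₗ[k] X :=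
  T ∘ₗ (TensorProduct.assoc k X X X).symm.toLinearMap ∘ₗ
      TensorProduct.map ψ (LinearMap.id : X ⊗[k] X →ₗ[k] X ⊗[k] X)
    + ψ ∘ₗ (TensorProduct.assoc k X X X).symm.toLinearMap ∘ₗ
      TensorProduct.map T (LinearMap.id : X ⊗[k] X →ₗ[k] X ⊗[k] X)
    - ψ ∘ₗ TensorProduct.map (TensorProduct.map T T) T ∘ₗ ρ ∘ₗ
      TensorProduct.map LinearMap.id (TensorProduct.map (D3 Δ) (D3 Δ))
    - T ∘ₗ TensorProduct.map (TensorProduct.map ψ T) T ∘ₗ ρ ∘ₗ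
      TensorProduct.map LinearMap.id (TensorProduct.map (D3 Δ) (D3 Δ))
    - T ∘ₗ TensorProduct.map (TensorProduct.map T ψ) T ∘ₗ ρ ∘ₗ
      TensorProduct.map LinearMap.id (TensorProduct.map (D3 Δ) (D3 Δ))
    - T ∘ₗ TensorProduct.map (TensorProduct.map T T) ψ ∘ₗ ρ ∘ₗ
      TensorProduct.map LinearMap.id (TensorProduct.map (D3 Δ) (D3 Δ))

end TSDCore

variable (k : Type*) [Field k] (g : Type*) [LieRing g] [LieAlgebra k g]

/-- The comultiplication `Δ(a,x) = (a,x)⊗(1,0) + (1,0)⊗(0,x)` on `X = k ⊕ g`. -/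
def Dmap : (k × g) →ₗ[k] (k × g) ⊗[k] (k × g) :=
  (TensorProduct.mk k (k × g) (k × g)).flip ((1 : k), (0 : g))
    + TensorProduct.mk k (k × g) (k × g) ((1 : k), (0 : g)) ∘ₗ
      (LinearMap.inr k k g ∘ₗ LinearMap.snd k k g)

/-- The Lie bracket of `g` as a bilinear map. -/
def brk : g →ₗ[k] g →ₗ[k] g :=
  LinearMap.mk₂ k (fun x y => ⁅x, y⁆) add_lie smul_lie lie_add lie_smul

/-- The binary self-distributive map `q((a,x)⊗(b,y)) = (ab, b•x + ⁅x,y⁆)` on `X = k ⊕ g`. -/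
def qmap : (k × g) ⊗[k] (k × g) →ₗ[k] (k × g) :=
  LinearMap.inl k k g ∘ₗ LinearMap.mul' k k ∘ₗ
      TensorProduct.map (LinearMap.fst k k g) (LinearMap.fst k k g)
    + LinearMap.inr k k g ∘ₗ
      ((TensorProduct.rid k g).toLinearMap ∘ₗ
          TensorProduct.map (LinearMap.snd k k g) (LinearMap.fst k k g)
        + TensorProduct.lift (brk k g) ∘ₗ
          TensorProduct.map (LinearMap.snd k k g) (LinearMap.snd k k g))

/-- The ternary self-distributive map obtained by composing `q` with itself:
`T((a,x)⊗(b,y)⊗(c,z)) = (abc, bc·x + c[x,y] + b[x,z] + [[x,y],z])`. -/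
def Tmap : ((k × g) ⊗[k] (k × g)) ⊗[k] (k × g) →ₗ[k] (k × g) :=
  qmap k g ∘ₗ TensorProduct.map (qmap k g) LinearMap.id

/-- `Θ²(φ)((a,x)⊗(b,y)⊗(c,z)) = (0, bφ(x,z) + cφ(x,y) + [φ(x,y),z] + φ([x,y],z))`. -/
def Theta2 (φ : g →ₗ[k] g →ₗ[k] g) :
    ((k × g) ⊗[k] (k × g)) ⊗[k] (k × g) →ₗ[k] (k × g) :=
  LinearMap.inr k k g ∘ₗ
    (TensorProduct.lift φ ∘ₗ
        TensorProduct.map ((TensorProduct.rid k g).toLinearMap ∘ₗ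
          TensorProduct.map (LinearMap.snd k k g) (LinearMap.fst k k g))
          (LinearMap.snd k k g)
      + TensorProduct.lift φ ∘ₗ (TensorProduct.rid k (g ⊗[k] g)).toLinearMap ∘ₗ
          TensorProduct.map
            (TensorProduct.map (LinearMap.snd k k g) (LinearMap.snd k k g))
            (LinearMap.fst k k g)
      + TensorProduct.lift (brk k g) ∘ₗ
          TensorProduct.map (TensorProduct.lift φ ∘ₗ
            TensorProduct.map (LinearMap.snd k k g) (LinearMap.snd k k g))
            (LinearMap.snd k k g)
      + TensorProduct.lift φ ∘ₗ
          TensorProduct.map (TensorProduct.lift (brk k g) ∘ₗ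
            TensorProduct.map (LinearMap.snd k k g) (LinearMap.snd k k g))
            (LinearMap.snd k k g))

/-- If `φ` is a Lie 2-cocycle and `Θ²(φ) = δ¹_TSD f` for some ternary coderivation
`f : X → X`, then `φ` is a Lie 2-coboundary.  In particular `Θ²` is injective on
cohomology. -/
theorem stmt11 {k : Type*} [Field k] {g : Type*} [LieRing g] [LieAlgebra k g]
    (φ : g →ₗ[k] g →ₗ[k] g)
    (hcocycle : ∀ x y z : g,
      ⁅φ x y, z⁆ + ⁅φ y z, x⁆ + ⁅φ z x, y⁆
        + φ ⁅x, y⁆ z + φ ⁅y, z⁆ x + φ ⁅z, x⁆ y = 0)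
    (f : (k × g) →ₗ[k] (k × g)) (hf : IsTernaryCoderivation (Dmap k g) f)
    (hcobound : Theta2 k g φ = tsdD1 (Tmap k g) f) :
    ∃ g' : g →ₗ[k] g, ∀ x y : g, φ x y = g' ⁅x, y⁆ - ⁅g' x, y⁆ - ⁅x, g' y⁆ := by

  classical
  have key : ∀ v w u : k × g,
      Theta2 k g φ ((v ⊗ₜ[k] w) ⊗ₜ[k] u) = tsdD1 (Tmap k g) f ((v ⊗ₜ[k] w) ⊗ₜ[k] u) := by
    intro v w u; rw [hcobound]
  have hq : ∀ p q : k × g, qmap k g (p ⊗ₜ[k] q) = (p.1 * q.1, q.1 • p.2 + ⁅p.2, q.2⁆) := by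
    intro p q
    simp [qmap, brk, Prod.ext_iff]
  have hT : ∀ p q r : k × g, Tmap k g ((p ⊗ₜ[k] q) ⊗ₜ[k] r)
      = (p.1 * q.1 * r.1,
          r.1 • (q.1 • p.2 + ⁅p.2, q.2⁆) + ⁅q.1 • p.2 + ⁅p.2, q.2⁆, r.2⁆) := by
    intro p q r
    simp [Tmap, hq]
  have hTh : ∀ p q r : k × g, Theta2 k g φ ((p ⊗ₜ[k] q) ⊗ₜ[k] r)
      = (0, q.1 • φ p.2 r.2 + r.1 • φ p.2 q.2 + ⁅φ p.2 q.2, r.2⁆ + φ ⁅p.2, q.2⁆ r.2) := by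
    intro p q r
    simp [Theta2, brk, Prod.ext_iff]
  have hd1 : ∀ p q r : k × g, tsdD1 (Tmap k g) f ((p ⊗ₜ[k] q) ⊗ₜ[k] r)
      = f (Tmap k g ((p ⊗ₜ[k] q) ⊗ₜ[k] r))
        - Tmap k g ((f p ⊗ₜ[k] q) ⊗ₜ[k] r)
        - Tmap k g ((p ⊗ₜ[k] f q) ⊗ₜ[k] r)
        - Tmap k g ((p ⊗ₜ[k] q) ⊗ₜ[k] f r) := by
    intro p q r
    simp [tsdD1]

  have h1 : ∀ y : g, (f ((0:k), y)).1 = 0 ∧ (0:g) = ⁅y, (f ((1:k),(0:g))).2⁆ := by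
    intro y
    have h := key ((1:k),(0:g)) ((0:k), y) ((1:k),(0:g))
    rw [hTh, hd1, hT, hT, hT, hT] at h
    simp [Prod.ext_iff] at h
    obtain ⟨ha, hb⟩ := h
    rw [show f (0, 0) = 0 from map_zero f, Prod.fst_zero, zero_sub] at ha
    rw [show f (0, 0) = 0 from map_zero f, Prod.snd_zero, zero_sub] at hb
    exact ⟨neg_eq_zero.mp ha.symm, hb.trans (lie_skew _ _)⟩

  refine ⟨(LinearMap.snd k k g) ∘ₗ f ∘ₗ (LinearMap.inr k k g)
      + (f ((1:k),(0:g))).1 • LinearMap.id, fun x y => ?_⟩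
  have h := key ((0:k), x) ((0:k), y) ((1:k),(0:g))
  rw [hTh, hd1, hT, hT, hT, hT] at h
  simp [Prod.ext_iff, (h1 x).1, (h1 y).1, fun z => ((h1 z).2).symm] at h
  simp [LinearMap.add_apply, LinearMap.smul_apply]
  rw [h.2]
  module




end
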